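/- arXiv:2302.06366 — 4 statements merged into one kernel-verified Lean document; each statement's English description precedes it below -/
import Mathlib

section
/- Let P_n+1 be the directed path with n+2 vertices v_0,...,v_{n+1} and edges (v_i,v_{i+1}), and let L_n be the strict linear order on {0,...,n} viewed as a digraph with an edge (i,j) whenever i<j. Then for every finite digraph G, there exists a digraph homomorphism from P_{n+1} to G if and only if there is no digraph homomorphism from G to L_n. -/
/-!
A walk with `n + 2` vertices, followed by a map to `Fin (n + 1)` that increases along edges, is a
strictly monotone map `Fin (n + 2) → Fin (n + 1)`, which cannot exist. Conversely, if there is no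
such walk, ranking each vertex by the length of the longest walk ending at it (at most `n`)
increases strictly along every edge.
-/

namespace Relation

variable {V : Type*} (E : V → V → Prop)

def IsWalk {k : ℕ} (h : Fin (k + 1) → V) : Prop :=
  ∀ i : Fin k, E (h i.castSucc) (h i.succ)

def HasWalkEndingAt (k : ℕ) (v : V) : Prop :=
  ∃ h : Fin (k + 1) → V, IsWalk E h ∧ h (Fin.last k) = v

variable {E}

theorem IsWalk.snoc {k : ℕ} {h : Fin (k + 1) → V} (hh : IsWalk E h) {v : V}
    (hv : E (h (Fin.last k)) v) : IsWalk E (Fin.snoc h v : Fin (k + 2) → V) := by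
  intro i
  induction i using Fin.lastCases with
  | last => simpa [Fin.succ_last] using hv
  | cast j => simpa only [Fin.succ_castSucc, Fin.snoc_castSucc] using hh j

theorem hasWalkEndingAt_zero (v : V) : HasWalkEndingAt E 0 v :=
  ⟨fun _ => v, fun i => i.elim0, rfl⟩

theorem HasWalkEndingAt.of_edge {k : ℕ} {u v : V} (hu : HasWalkEndingAt E k u) (huv : E u v) :
    HasWalkEndingAt E (k + 1) v := by
  obtain ⟨h, hh, rfl⟩ := hu
  exact ⟨Fin.snoc h v, hh.snoc huv, Fin.snoc_last _ _⟩

theorem IsWalk.strictMono_comp {α : Type*} [Preorder α] {k : ℕ} {h : Fin (k + 1) → V}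
    (hh : IsWalk E h) {g : V → α} (hg : ∀ u v, E u v → g u < g v) : StrictMono (g ∘ h) :=
  Fin.strictMono_iff_lt_succ.mpr fun i => hg _ _ (hh i)

theorem IsWalk.not_exists_hom_fin {n : ℕ} {h : Fin (n + 2) → V} (hh : IsWalk E h) :
    ¬ ∃ g : V → Fin (n + 1), ∀ u v, E u v → g u < g v := by
  rintro ⟨g, hg⟩
  have := Fin.le_of_injective _ (hh.strictMono_comp hg).injective
  omega

variable (E) in
open Classical in
/-- The length of a longest walk ending at `v`, capped at `n`. -/
noncomputable def walkRank (n : ℕ) (v : V) : ℕ :=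
  Nat.findGreatest (fun k => HasWalkEndingAt E k v) n

theorem walkRank_le (n : ℕ) (v : V) : walkRank E n v ≤ n := by
  classical
  exact Nat.findGreatest_le n

theorem hasWalkEndingAt_walkRank (n : ℕ) (v : V) : HasWalkEndingAt E (walkRank E n v) v := by
  classical
  exact Nat.findGreatest_spec (P := fun k => HasWalkEndingAt E k v) n.zero_le
    (hasWalkEndingAt_zero v)

theorem walkRank_lt_of_edge {n : ℕ} (hno : ∀ h : Fin (n + 2) → V, ¬ IsWalk E h) {u v : V}
    (huv : E u v) : walkRank E n u < walkRank E n v := by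
  classical
  have hv : HasWalkEndingAt E (walkRank E n u + 1) v := (hasWalkEndingAt_walkRank n u).of_edge huv
  have hle : walkRank E n u + 1 ≤ n := by
    by_contra hgt
    have hrank : walkRank E n u = n := by have := walkRank_le (E := E) n u; omega
    rw [hrank] at hv
    obtain ⟨h, hh, -⟩ := hv
    exact hno h hh
  exact Nat.lt_of_succ_le (Nat.le_findGreatest (P := fun k => HasWalkEndingAt E k v) hle hv)

end Relation

open Relation in
theorem path_linear_order_duality_general (n : ℕ) (V : Type) (E : V → V → Prop) :
    (∃ h : Fin (n + 2) → V, ∀ i : Fin (n + 1), E (h i.castSucc) (h i.succ)) ↔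
      ¬ ∃ g : V → Fin (n + 1), ∀ u v, E u v → g u < g v := by
  refine ⟨fun ⟨h, hh⟩ => IsWalk.not_exists_hom_fin (E := E) hh, fun hno => ?_⟩
  by_contra hwalk
  refine hno ⟨fun v => ⟨walkRank E n v, Nat.lt_succ_of_le (walkRank_le n v)⟩, fun u v huv => ?_⟩
  exact Fin.mk_lt_mk.mpr (walkRank_lt_of_edge (fun h hh => hwalk ⟨h, hh⟩) huv)

/-- Duality between the directed path P_{n+1} (vertices v_0,...,v_{n+1}) and the
transitive tournament L_n on {0,...,n}: a finite digraph G admits a homomorphism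
from P_{n+1} iff G admits no homomorphism to L_n. -/
theorem path_linear_order_duality (n : ℕ) (V : Type) [Fintype V] (E : V → V → Prop) :
    (∃ h : Fin (n + 2) → V, ∀ i : Fin (n + 1), E (h i.castSucc) (h i.succ)) ↔
      ¬ ∃ g : V → Fin (n + 1), ∀ u v, E u v → g u < g v :=
  path_linear_order_duality_general n V E
end

section
/- Let q be a union of conjunctive queries over digraphs, identified with a finite set F of pointed digraphs (the canonical instances of its disjuncts), so that for a pointed digraph (I,a), a ∈ q(I) iff some (B,b) ∈ F admits a homomorphism to (I,a). Let (E⁺, E⁻) be finite sets of pointed digraphs such that q fits (E⁺,E⁻) (every positive example admits a homomorphism from some member of F, no negative example does) and (E⁺, E⁻) is a homomorphism duality. Then every union of conjunctive queries q' (given by a finite set F' of pointed digraphs) that fits (E⁺,E⁻) is equivalent to q, i.e., for every pointed digraph (I,a): some member of F maps to (I,a) iff some member of F' maps to (I,a). -/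
structure PDigraph where
  V : Type
  E : V → V → Prop
  pt : V

/-- Existence of a pointed digraph homomorphism. -/
def PHom (G H : PDigraph) : Prop :=
  ∃ f : G.V → H.V, (∀ u v, G.E u v → H.E (f u) (f v)) ∧ f G.pt = H.pt

/-- The UCQ given by the set `F` of pointed digraphs fits the examples `(Ep, Em)`. -/
def Fits (F Ep Em : Set PDigraph) : Prop :=
  (∀ I ∈ Ep, ∃ B ∈ F, PHom B I) ∧ (∀ I ∈ Em, ¬ ∃ B ∈ F, PHom B I)

lemma PHom.trans {A B C : PDigraph} (h1 : PHom A B) (h2 : PHom B C) : PHom A C := by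
  obtain ⟨f, hf, hfp⟩ := h1
  obtain ⟨g, hg, hgp⟩ := h2
  exact ⟨g ∘ f, fun u v h => hg _ _ (hf u v h), by simp [hfp, hgp]⟩

lemma fits_iff (G Ep Em : Set PDigraph) (hfit : Fits G Ep Em)
    (hdual : ∀ I : PDigraph, (∃ B ∈ Ep, PHom B I) ↔ ¬ ∃ B ∈ Em, PHom I B)
    (I : PDigraph) : (∃ B ∈ G, PHom B I) ↔ ∃ B ∈ Ep, PHom B I := by
  constructor
  · rintro ⟨B, hB, hBI⟩
    rw [hdual]
    rintro ⟨C, hC, hIC⟩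
    exact hfit.2 C hC ⟨B, hB, hBI.trans hIC⟩
  · rintro ⟨B, hB, hBI⟩
    obtain ⟨B', hB', hB'B⟩ := hfit.1 B hB
    exact ⟨B', hB', hB'B.trans hBI⟩

/-- If the UCQ `q` (given by `F`) fits `(Ep, Em)` and `(Ep, Em)` is a homomorphism
duality, then any UCQ `q'` (given by `F'`) fitting `(Ep, Em)` is equivalent to `q`. -/
theorem duality_uniquely_characterizes (F F' Ep Em : Set PDigraph)
    (hF : F.Finite) (hF' : F'.Finite) (hEp : Ep.Finite) (hEm : Em.Finite)
    (hfit : Fits F Ep Em)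
    (hdual : ∀ I : PDigraph, (∃ B ∈ Ep, PHom B I) ↔ ¬ ∃ B ∈ Em, PHom I B)
    (hfit' : Fits F' Ep Em) :
    ∀ I : PDigraph, (∃ B ∈ F, PHom B I) ↔ ∃ B ∈ F', PHom B I := by
  intro I
  rw [fits_iff F Ep Em hfit hdual I, fits_iff F' Ep Em hfit' hdual I]
end

section
/- Let (E⁺, E⁻) be finite sets of pointed digraphs that uniquely characterize a UCQ q among UCQs, meaning: q fits (E⁺,E⁻) and every UCQ fitting (E⁺,E⁻) is equivalent to q. Then (E⁺, E⁻) is a homomorphism duality; that is, for every pointed digraph (I,a), some member of E⁺ maps homomorphically to (I,a) if and only if (I,a) maps homomorphically to no member of E⁻. -/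
lemma PHom.refl (G : PDigraph) : PHom G G :=
  ⟨id, fun _ _ h => h, rfl⟩

lemma PHom.trans_s7 {G H K : PDigraph} (h1 : PHom G H) (h2 : PHom H K) : PHom G K := by
  obtain ⟨f, hf, hfp⟩ := h1
  obtain ⟨g, hg, hgp⟩ := h2
  exact ⟨g ∘ f, fun u v h => hg _ _ (hf u v h), by simp [hfp, hgp]⟩

/-- If `(Ep, Em)` uniquely characterizes the UCQ `q` given by `F` (it fits, and any
UCQ fitting it is equivalent to `q`), then `(Ep, Em)` is a homomorphism duality. -/
theorem unique_characterization_gives_duality (F Ep Em : Set PDigraph)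
    (hF : F.Finite) (hEp : Ep.Finite) (hEm : Em.Finite)
    (hfit : Fits F Ep Em)
    (huniq : ∀ F' : Set PDigraph, F'.Finite → Fits F' Ep Em →
      ∀ I : PDigraph, (∃ B ∈ F', PHom B I) ↔ ∃ B ∈ F, PHom B I) :
    ∀ I : PDigraph, (∃ B ∈ Ep, PHom B I) ↔ ¬ ∃ B ∈ Em, PHom I B := by
  intro I
  constructor
  · rintro ⟨B, hB, hBI⟩ ⟨C, hC, hIC⟩
    obtain ⟨A, hA, hAB⟩ := hfit.1 B hB
    exact hfit.2 C hC ⟨A, hA, hAB.trans_s7 (hBI.trans_s7 hIC)⟩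
  · intro hneg
    -- Step 1: F ∪ {I} fits, so by uniqueness F maps to I.
    have hfit' : Fits (F ∪ {I}) Ep Em := by
      constructor
      · intro J hJ
        obtain ⟨A, hA, hAJ⟩ := hfit.1 J hJ
        exact ⟨A, Or.inl hA, hAJ⟩
      · rintro C hC ⟨B, hB, hBC⟩
        rcases hB with hB | hB
        · exact hfit.2 C hC ⟨B, hB, hBC⟩
        · exact hneg ⟨C, hC, by rwa [Set.mem_singleton_iff.mp hB] at hBC⟩
    have hFI : ∃ A ∈ F, PHom A I :=
      (huniq (F ∪ {I}) (hF.union (Set.finite_singleton I)) hfit' I).mp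
        ⟨I, Or.inr rfl, PHom.refl I⟩
    -- Step 2: Ep itself fits, so by uniqueness Ep maps to I.
    have hfitEp : Fits Ep Ep Em := by
      constructor
      · intro J hJ
        exact ⟨J, hJ, PHom.refl J⟩
      · rintro C hC ⟨J, hJ, hJC⟩
        obtain ⟨A, hA, hAJ⟩ := hfit.1 J hJ
        exact hfit.2 C hC ⟨A, hA, hAJ.trans_s7 hJC⟩
    exact (huniq Ep hEp hfitEp I).mpr hFI
end

section
/- In the class of digraphs satisfying Σ = {E(x,y) ∧ E(y,z) ∧ E(z,u) → E(x,u), E(x,y) → E(y,x)}, the pair ({A},{B}) is a homomorphism duality, where A is the single-vertex digraph with a self-loop and B is the 2-cycle (two vertices a,b with edges (a,b),(b,a)). That is: for every digraph C satisfying Σ, A → C if and only if C ↛ B. -/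
/-- In the class of digraphs satisfying Σ (3-step composition and symmetry), the
pair ({A},{B}) is a homomorphism duality, where A is the self-loop and B the
2-cycle: C has a self-loop iff C does not map to the 2-cycle. -/
theorem selfloop_two_cycle_duality (V : Type) (E : V → V → Prop)
    (htrans3 : ∀ x y z u, E x y → E y z → E z u → E x u)
    (hsym : ∀ x y, E x y → E y x) :
    (∃ v, E v v) ↔ ¬ ∃ f : V → Bool, ∀ u v, E u v → f u ≠ f v := by
  classical
  constructor
  · rintro ⟨v, hv⟩ ⟨f, hf⟩
    exact hf v v hv rfl
  · intro hno
    by_contra hloop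
    push_neg at hloop
    apply hno
    -- component relation: walks collapse to length 1 or 2
    set R : V → V → Prop := fun x y => x = y ∨ E x y ∨ ∃ w, E x w ∧ E w y with hR
    have hequiv : Equivalence R := by
      constructor
      · intro x; exact Or.inl rfl
      · rintro x y (rfl | h | ⟨w, h1, h2⟩)
        · exact Or.inl rfl
        · exact Or.inr (Or.inl (hsym _ _ h))
        · exact Or.inr (Or.inr ⟨w, hsym _ _ h2, hsym _ _ h1⟩)
      · rintro x y z (rfl | h | ⟨w, h1, h2⟩) (rfl | h' | ⟨w', h1', h2'⟩)
        · exact Or.inl rfl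
        · exact Or.inr (Or.inl h')
        · exact Or.inr (Or.inr ⟨w', h1', h2'⟩)
        · exact Or.inr (Or.inl h)
        · exact Or.inr (Or.inr ⟨y, h, h'⟩)
        · exact Or.inr (Or.inl (htrans3 _ _ _ _ h h1' h2'))
        · exact Or.inr (Or.inr ⟨w, h1, h2⟩)
        · exact Or.inr (Or.inl (htrans3 _ _ _ _ h1 h2 h'))
        · exact Or.inr (Or.inr ⟨w', htrans3 _ _ _ _ h1 h2 h1', h2'⟩)
    let S : Setoid V := ⟨R, hequiv⟩
    let rep : V → V := fun v => (Quotient.mk S v).out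
    -- no vertex is at both odd and even distance from the rep
    have hnoth : ∀ r v, E r v → (∃ w, E r w ∧ E w v) → False := by
      rintro r v hrv ⟨w, hrw, hwv⟩
      exact hloop r (htrans3 r w v r hrw hwv (hsym r v hrv))
    refine ⟨fun v => if E (rep v) v then true else false, ?_⟩
    intro u v huv
    have hRuv : R u v := Or.inr (Or.inl huv)
    have hrep : rep u = rep v := by
      have : (Quotient.mk S u) = (Quotient.mk S v) := Quotient.sound hRuv
      simp only [rep, this]
    have hru : R (rep u) u := Quotient.mk_out u
    have hrv : R (rep v) v := Quotient.mk_out v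
    show (if E (rep u) u then true else false) ≠ (if E (rep v) v then true else false)
    rw [hrep] at hru ⊢
    set r := rep v with hr
    have key : (E r u ∧ ¬ E r v) ∨ (¬ E r u ∧ E r v) := by
      rcases hru with rfl | h | ⟨w, h1, h2⟩
      · exact Or.inr ⟨fun h => hloop _ h, huv⟩
      · exact Or.inl ⟨h, fun h' => hnoth r v h' ⟨u, h, huv⟩⟩
      · exact Or.inr ⟨fun h' => hnoth r u h' ⟨w, h1, h2⟩,
          htrans3 _ _ _ _ h1 h2 huv⟩
    rcases key with ⟨h1, h2⟩ | ⟨h1, h2⟩ <;> simp [h1, h2]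
end
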